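/- If an IGDD(T,K) on v points with w total hole points exists, and for each group-hole size pair (g;h) in T there exists an IPBD((g+i; h+i), K), then there exists an IPBD((v+i; w+i), K). -/

import Mathlib

/-!
Take as new point set the old points together with `i` adjoined points. Keep the blocks of the
IGDD, and place a copy of the given `IPBD((g+i; h+i), K)` on each group together with the new
points, its hole going onto the group's hole together with the new points. Two old points of
different groups are then covered only by the IGDD; two old points of one group, or an old point
and a new one, only by the design filling that group; two new points lie in the merged hole.
-/

/-- There exists an incomplete pairwise balanced design `IPBD((n;m),K)`. -/
def IPBDExists (n m : ℕ) (K : Set ℕ) : Prop :=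
  ∃ (W : Finset (Fin n)) (B : Multiset (Finset (Fin n))),
    W.card = m ∧
    (∀ b ∈ B, b.card ∈ K) ∧
    (∀ b ∈ B, ∀ x ∈ b, ∀ y ∈ b, x ∈ W → y ∈ W → x = y) ∧
    (∀ x y : Fin n, x ≠ y → ¬(x ∈ W ∧ y ∈ W) →
      Multiset.countP (fun s => x ∈ s ∧ y ∈ s) B = 1)

open Finset

theorem Finset.exists_equiv_map_eq {α β : Type*} [Fintype α] [Fintype β]
    {s : Finset α} {t : Finset β} (h : Fintype.card α = Fintype.card β) (hst : #s = #t) :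
    ∃ e : α ≃ β, s.map e.toEmbedding = t := by
  classical
  have e₁ : {x // x ∈ s} ≃ {y // y ∈ t} := Fintype.equivOfCardEq (by simpa using hst)
  have e₂ : {x // x ∉ s} ≃ {y // y ∉ t} :=
    Fintype.equivOfCardEq (by simp [Fintype.card_subtype_compl, h, hst])
  let e : α ≃ β := (Equiv.sumCompl (· ∈ s)).symm.trans
    ((e₁.sumCongr e₂).trans (Equiv.sumCompl (· ∈ t)))
  have he : ∀ x, e x ∈ t ↔ x ∈ s := by
    intro x
    by_cases hx : x ∈ s
    · simp [e, Equiv.sumCompl_symm_apply_of_pos hx, hx]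
    · simpa [e, Equiv.sumCompl_symm_apply_of_neg hx, hx] using (e₂ ⟨x, hx⟩).2
  refine ⟨e, ?_⟩
  ext y
  simp only [mem_map_equiv, ← he, Equiv.apply_symm_apply]

theorem Multiset.countP_sum' {ι α : Type*} (p : α → Prop) [DecidablePred p]
    (s : Finset ι) (M : ι → Multiset α) :
    (∑ j ∈ s, M j).countP p = ∑ j ∈ s, (M j).countP p :=
  map_sum (Multiset.countPAddMonoidHom p) M s

section Design

variable {α β : Type*} [DecidableEq α] [DecidableEq β]

theorem countP_mem_pair_map (f : α ↪ β) (B : Multiset (Finset α)) (x y : α) :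
    (B.map (·.map f)).countP (fun s => f x ∈ s ∧ f y ∈ s) =
      B.countP (fun s => x ∈ s ∧ y ∈ s) := by
  rw [Multiset.countP_map, Multiset.countP_eq_card_filter]
  simp only [mem_map']

/-- An IPBD on the point set `S`, a finset of an ambient type, with hole `W`: this lets the
designs filling the groups live directly inside the final point set. -/
structure IsIPBDOn (S W : Finset α) (B : Multiset (Finset α)) (K : Set ℕ) : Prop where
  subset : ∀ b ∈ B, b ⊆ S
  card_mem : ∀ b ∈ B, #b ∈ K
  hole : ∀ b ∈ B, ∀ x ∈ b, ∀ y ∈ b, x ∈ W → y ∈ W → x = y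
  cover : ∀ x ∈ S, ∀ y ∈ S, x ≠ y → ¬(x ∈ W ∧ y ∈ W) →
    B.countP (fun s => x ∈ s ∧ y ∈ s) = 1

namespace IsIPBDOn

variable {S W : Finset α} {B : Multiset (Finset α)} {K : Set ℕ}

theorem countP_mem_pair (h : IsIPBDOn S W B K) {x y : α} (hxy : x ≠ y)
    (hW : ¬(x ∈ W ∧ y ∈ W)) :
    B.countP (fun s => x ∈ s ∧ y ∈ s) = if x ∈ S ∧ y ∈ S then 1 else 0 := by
  split_ifs with hS
  · exact h.cover x hS.1 y hS.2 hxy hW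
  · exact Multiset.countP_eq_zero.mpr fun b hb hxyb =>
      hS ⟨h.subset b hb hxyb.1, h.subset b hb hxyb.2⟩

theorem map (h : IsIPBDOn S W B K) (f : α ↪ β) :
    IsIPBDOn (S.map f) (W.map f) (B.map (·.map f)) K where
  subset := by
    simp only [Multiset.mem_map]
    rintro _ ⟨b, hb, rfl⟩
    exact map_subset_map.mpr (h.subset b hb)
  card_mem := by
    simp only [Multiset.mem_map]
    rintro _ ⟨b, hb, rfl⟩
    simpa using h.card_mem b hb
  hole := by
    simp only [Multiset.mem_map]
    rintro _ ⟨b, hb, rfl⟩ _ hx _ hy hxW hyW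
    obtain ⟨x, hxb, rfl⟩ := mem_map.mp hx
    obtain ⟨y, hyb, rfl⟩ := mem_map.mp hy
    rw [mem_map' f] at hxW hyW
    rw [h.hole b hb x hxb y hyb hxW hyW]
  cover := by
    rintro _ hx _ hy hxy hW
    obtain ⟨x, hxS, rfl⟩ := mem_map.mp hx
    obtain ⟨y, hyS, rfl⟩ := mem_map.mp hy
    rw [countP_mem_pair_map]
    simp only [mem_map' f] at hW
    exact h.cover x hxS y hyS (ne_of_apply_ne f hxy) hW

end IsIPBDOn

theorem ipbdExists_iff {n m : ℕ} {K : Set ℕ} :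
    IPBDExists n m K ↔ ∃ W B, #W = m ∧ IsIPBDOn (univ : Finset (Fin n)) W B K := by
  simp only [IPBDExists]
  refine exists₂_congr fun W B => and_congr_right fun _ => ⟨?_, ?_⟩
  · rintro ⟨hK, hW, hB⟩
    exact ⟨fun b _ => subset_univ b, hK, hW, fun x _ y _ => hB x y⟩
  · rintro ⟨-, hK, hW, hB⟩
    exact ⟨hK, hW, fun x y => hB x (mem_univ x) y (mem_univ y)⟩

theorem IPBDExists.exists_isIPBDOn {S T : Finset β} {K : Set ℕ} (h : IPBDExists #S #T K)
    (hTS : T ⊆ S) : ∃ B, IsIPBDOn S T B K := by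
  obtain ⟨W, B, hW, hB⟩ := ipbdExists_iff.mp h
  obtain ⟨e, he⟩ := exists_equiv_map_eq (s := W) (β := S) (t := T.subtype (· ∈ S)) (by simp)
    (by rw [hW, card_subtype, filter_true_of_mem hTS])
  have := hB.map (e.toEmbedding.trans (Function.Embedding.subtype _))
  rw [← map_map, ← map_map, he, map_univ_equiv, univ_eq_attach, attach_map_val,
    subtype_map_of_mem hTS] at this
  exact ⟨_, this⟩

theorem IsIPBDOn.ipbdExists [Fintype α] {W : Finset α} {B : Multiset (Finset α)} {K : Set ℕ}
    (h : IsIPBDOn univ W B K) : IPBDExists (Fintype.card α) #W K := by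
  have := h.map (Fintype.equivFin α).toEmbedding
  rw [map_univ_equiv] at this
  exact ipbdExists_iff.mpr ⟨_, _, card_map _, this⟩

end Design

theorem Finset.disjSum_inter_disjSum {α β : Type*} [DecidableEq α] [DecidableEq β]
    (s s' : Finset α) (t t' : Finset β) :
    s.disjSum t ∩ s'.disjSum t' = (s ∩ s').disjSum (t ∩ t') := by
  ext (x | x) <;> simp

section Filling

variable {α ι N : Type*} [DecidableEq α]

/-- The groups are the fibres of `grp`, and `H` is the union of the holes of the groups. -/
structure IsIGDD (grp : α → ι) (H : Finset α) (B : Multiset (Finset α)) (K : Set ℕ) :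
    Prop where
  card_mem : ∀ b ∈ B, #b ∈ K
  meet : ∀ b ∈ B, ∀ x ∈ b, ∀ y ∈ b, grp x = grp y → x = y
  cover : ∀ x y, grp x ≠ grp y → ¬(x ∈ H ∧ y ∈ H) → B.countP (fun s => x ∈ s ∧ y ∈ s) = 1
  hole : ∀ x y, x ≠ y → x ∈ H → y ∈ H → B.countP (fun s => x ∈ s ∧ y ∈ s) = 0

variable (N) in
def groupSpan [Fintype α] [Fintype N] [DecidableEq ι] (grp : α → ι) (j : ι) :
    Finset (α ⊕ N) :=
  ({x | grp x = j} : Finset α).disjSum univ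

namespace IsIGDD

variable {grp : α → ι} {H : Finset α} {B : Multiset (Finset α)} {K : Set ℕ}

theorem countP_mem_pair [DecidableEq ι] (h : IsIGDD grp H B K) {x y : α} (hxy : x ≠ y)
    (hH : ¬(x ∈ H ∧ y ∈ H)) :
    B.countP (fun s => x ∈ s ∧ y ∈ s) = if grp x = grp y then 0 else 1 := by
  split_ifs with hg
  · exact Multiset.countP_eq_zero.mpr fun b hb hxyb => hxy (h.meet b hb x hxyb.1 y hxyb.2 hg)
  · exact h.cover x y hg hH

theorem eq_of_mem_hole (h : IsIGDD grp H B K) {b : Finset α} (hb : b ∈ B) {x y : α}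
    (hx : x ∈ b) (hy : y ∈ b) (hxH : x ∈ H) (hyH : y ∈ H) : x = y := by
  by_contra hxy
  exact Multiset.countP_eq_zero.mp (h.hole x y hxy hxH hyH) b hb ⟨hx, hy⟩

variable [Fintype α] [Fintype N] [DecidableEq N] [Fintype ι] [DecidableEq ι]

theorem countP_map_inl_add_card_groupSpan (h : IsIGDD grp H B K) {x y : α ⊕ N} (hxy : x ≠ y)
    (hW : ¬(x ∈ H.disjSum univ ∧ y ∈ H.disjSum univ)) :
    (B.map (·.map .inl)).countP (fun s => x ∈ s ∧ y ∈ s) +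
      #{j | x ∈ groupSpan N grp j ∧ y ∈ groupSpan N grp j} = 1 := by
  rcases x with a | a <;> rcases y with b | b
  · have hold := countP_mem_pair_map (.inl : α ↪ α ⊕ N) B a b
    simp only [Function.Embedding.inl_apply] at hold
    rw [hold, h.countP_mem_pair (by simpa using hxy) (by simpa using hW)]
    by_cases hg : grp a = grp b
    · simp [groupSpan, hg, filter_eq]
    · simp only [groupSpan, hg, if_false, inl_mem_disjSum, mem_filter, mem_univ, true_and]
      rw [filter_false_of_mem fun j _ h => hg (h.1.trans h.2.symm), card_empty]
  · simp [groupSpan, Multiset.countP_map, filter_eq]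
  · simp [groupSpan, Multiset.countP_map, filter_eq]
  · simp at hW

theorem isIPBDOn_fill (hB : IsIGDD grp H B K) {F : ι → Multiset (Finset (α ⊕ N))}
    (hF : ∀ j, IsIPBDOn (groupSpan N grp j) (H.disjSum univ ∩ groupSpan N grp j) (F j) K) :
    IsIPBDOn univ (H.disjSum univ) (B.map (·.map .inl) + ∑ j, F j) K where
  subset b _ := subset_univ b
  card_mem := by
    intro b hb
    rcases Multiset.mem_add.mp hb with hb | hb
    · obtain ⟨b, hbB, rfl⟩ := Multiset.mem_map.mp hb
      rw [card_map]
      exact hB.card_mem b hbB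
    · obtain ⟨j, -, hb⟩ := Multiset.mem_sum.mp hb
      exact (hF j).card_mem b hb
  hole := by
    intro b hb x hx y hy hxW hyW
    rcases Multiset.mem_add.mp hb with hb | hb
    · obtain ⟨b, hbB, rfl⟩ := Multiset.mem_map.mp hb
      obtain ⟨a, ha, rfl⟩ := mem_map.mp hx
      obtain ⟨a', ha', rfl⟩ := mem_map.mp hy
      simp only [Function.Embedding.inl_apply, inl_mem_disjSum] at hxW hyW
      rw [hB.eq_of_mem_hole hbB ha ha' hxW hyW]
    · obtain ⟨j, -, hb⟩ := Multiset.mem_sum.mp hb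
      have hS := (hF j).subset b hb
      exact (hF j).hole b hb x hx y hy (mem_inter.mpr ⟨hxW, hS hx⟩) (mem_inter.mpr ⟨hyW, hS hy⟩)
  cover := by
    rintro x - y - hxy hW
    have hWj : ∀ j, ¬(x ∈ H.disjSum univ ∩ groupSpan N grp j ∧
        y ∈ H.disjSum univ ∩ groupSpan N grp j) := fun j hj =>
      hW ⟨(mem_inter.mp hj.1).1, (mem_inter.mp hj.2).1⟩
    rw [Multiset.countP_add, Multiset.countP_sum',
      sum_congr rfl fun j _ => (hF j).countP_mem_pair hxy (hWj j), sum_boole, Nat.cast_id]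
    exact hB.countP_map_inl_add_card_groupSpan hxy hW

end IsIGDD

end Filling

/-- Filling the groups of an IGDD: if an `IGDD(T,K)` on `v` points with `w` hole
points in total exists, and for each group (of size `g`, hole size `h`) there exists
an `IPBD((g+i; h+i), K)`, then there exists an `IPBD((v+i; w+i), K)`. -/
theorem igdd_to_ipbd (v u i : ℕ) (K : Set ℕ)
    (grp : Fin v → Fin u) (H : Finset (Fin v))
    (B : Multiset (Finset (Fin v)))
    (hsz : ∀ b ∈ B, b.card ∈ K)
    (hmeet : ∀ b ∈ B, ∀ x ∈ b, ∀ y ∈ b, grp x = grp y → x = y)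
    (hcov : ∀ x y : Fin v, grp x ≠ grp y → ¬(x ∈ H ∧ y ∈ H) →
      Multiset.countP (fun s => x ∈ s ∧ y ∈ s) B = 1)
    (hholes : ∀ x y : Fin v, x ≠ y → x ∈ H → y ∈ H →
      Multiset.countP (fun s => x ∈ s ∧ y ∈ s) B = 0)
    (hfill : ∀ j : Fin u,
      IPBDExists ((Finset.univ.filter fun x => grp x = j).card + i)
        (((Finset.univ.filter fun x => grp x = j) ∩ H).card + i) K) :
    IPBDExists (v + i) (H.card + i) K := by
  have hB : IsIGDD grp H B K := ⟨hsz, hmeet, hcov, hholes⟩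
  have hF : ∀ j, ∃ F, IsIPBDOn (groupSpan (Fin i) grp j)
      (H.disjSum univ ∩ groupSpan (Fin i) grp j) F K := fun j =>
    IPBDExists.exists_isIPBDOn
      (by simpa [groupSpan, disjSum_inter_disjSum, card_disjSum, inter_comm] using hfill j)
      inter_subset_right
  choose F hF using hF
  simpa [card_disjSum] using (hB.isIPBDOn_fill hF).ipbdExists
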